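/- Let (M, 𝓜, μ) be a σ-finite separable measure space with 0 < μ(M) ≤ ∞. Let A and B be bounded linear operators on L²(M; dμ) which are both integral operators, with μ⊗μ-measurable kernels A(·,·) and B(·,·) respectively, and suppose A is positivity preserving (equivalently, A(x,y) ≥ 0 μ⊗μ-a.e.). Then B is dominated by A, i.e., |Bf| ≤ A|f| μ-a.e. for every f ∈ L²(M; dμ), if and only if |B(x,y)| ≤ A(x,y) for μ⊗μ-a.e. (x,y) ∈ M × M. -/

import Mathlib

/-!
Testing the domination on `f = c • 𝟙_E`, `|f| = ‖c‖ • 𝟙_E` gives, for a.e. `x`,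
`‖c ∫_E b(x,·)‖ ≤ ‖c‖ ∫_E a(x,·)` for each set `E` of finite measure. Separability of `μ` lets a
countable measure-dense family of sets `E` (cut down to the spanning sets, where the slices are
integrable) detect the sign of the slices `y ↦ ‖c‖ Re a(x,y) - Re (c b(x,y))`, so
`Re (c b) ≤ ‖c‖ a` a.e. on `M × M`; letting `c` run through a countable dense subset of `ℂ` and
taking `c = conj b` yields `‖b‖ ≤ a`. Conversely, `‖b‖ ≤ a` gives `‖∫ b f‖ ≤ ∫ a ‖f‖` pointwise.
-/

open MeasureTheory Filter Set Topology
open scoped ComplexOrder ENNReal symmDiff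

namespace MeasureTheory.Measure.MeasureDense

variable {α : Type*} [MeasurableSpace α] {μ : Measure α} {𝒜 : Set (Set α)}

lemma restrict (h𝒜 : μ.MeasureDense 𝒜) {t : Set α} (ht : MeasurableSet t) :
    (μ.restrict t).MeasureDense 𝒜 where
  measurable := h𝒜.measurable
  approx s hs hμs ε hε := by
    rw [Measure.restrict_apply hs] at hμs
    obtain ⟨u, hu𝒜, hu⟩ := h𝒜.approx (s ∩ t) (hs.inter ht) hμs ε hε
    refine ⟨u, hu𝒜, lt_of_le_of_lt ?_ hu⟩
    rw [Measure.restrict_apply' ht]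
    refine measure_mono fun y ⟨hy, hyt⟩ => ?_
    rcases hy with ⟨hys, hyu⟩ | ⟨hyu, hys⟩
    exacts [Or.inl ⟨⟨hys, hyt⟩, hyu⟩, Or.inr ⟨hyu, fun h => hys h.1⟩]

lemma exists_seq_tendsto_measure_symmDiff (h𝒜 : μ.MeasureDense 𝒜) {t : Set α}
    (ht : MeasurableSet t) (hμt : μ t ≠ ∞) :
    ∃ u : ℕ → Set α, (∀ k, u k ∈ 𝒜) ∧ Tendsto (fun k => μ (t ∆ u k)) atTop (𝓝 0) := by
  choose u hu𝒜 hu using fun k : ℕ => h𝒜.approx t ht hμt (1 / (k + 1)) Nat.one_div_pos_of_nat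
  refine ⟨u, hu𝒜, tendsto_of_tendsto_of_tendsto_of_le_of_le tendsto_const_nhds ?_
    (fun _ => zero_le) fun k => (hu k).le⟩
  simpa using ENNReal.tendsto_ofReal tendsto_one_div_add_atTop_nhds_zero_nat

lemma ae_nonneg_of_forall_setIntegral_nonneg (h𝒜 : μ.MeasureDense 𝒜) {f : α → ℝ}
    (hf : Integrable f μ) (hpos : ∀ s ∈ 𝒜, 0 ≤ ∫ x in s, f x ∂μ) : 0 ≤ᵐ[μ] f := by
  refine MeasureTheory.ae_nonneg_of_forall_setIntegral_nonneg hf fun t ht hμt => ?_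
  obtain ⟨u, hu𝒜, hu⟩ := h𝒜.exists_seq_tendsto_measure_symmDiff ht hμt.ne
  have hdiff : ∀ k, ∫ x in u k, f x ∂μ
      = ∫ x in t, f x ∂μ + (∫ x in u k \ t, f x ∂μ - ∫ x in t \ u k, f x ∂μ) := fun k => by
    have hu := h𝒜.measurable _ (hu𝒜 k)
    rw [← integral_inter_add_sdiff (s := u k) ht hf.integrableOn,
      ← integral_inter_add_sdiff (s := t) hu hf.integrableOn, inter_comm]
    ring
  have hsmall : ∀ v : ℕ → Set α, (∀ k, v k ⊆ t ∆ u k) →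
      Tendsto (fun k => ∫ x in v k, f x ∂μ) atTop (𝓝 0) := fun v hv =>
    hf.tendsto_setIntegral_nhds_zero <| tendsto_of_tendsto_of_tendsto_of_le_of_le
      tendsto_const_nhds hu (fun _ => zero_le) fun k => measure_mono (hv k)
  have hlim : Tendsto (fun k => ∫ x in u k, f x ∂μ) atTop (𝓝 (∫ x in t, f x ∂μ)) := by
    simp_rw [hdiff]
    simpa using tendsto_const_nhds.add ((hsmall _ fun k => subset_union_right).sub
      (hsmall _ fun k => subset_union_left))
  exact ge_of_tendsto' hlim fun k => hpos _ (hu𝒜 k)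

lemma ae_nonneg_of_forall_setIntegral_inter_spanningSets_nonneg [SigmaFinite μ]
    (h𝒜 : μ.MeasureDense 𝒜) {f : α → ℝ} (hf : ∀ n, IntegrableOn f (spanningSets μ n) μ)
    (hpos : ∀ s ∈ 𝒜, ∀ n, 0 ≤ ∫ x in s ∩ spanningSets μ n, f x ∂μ) : 0 ≤ᵐ[μ] f := by
  rw [EventuallyLE, ← Measure.restrict_univ (μ := μ), ← iUnion_spanningSets μ,
    ae_restrict_iUnion_iff]
  refine fun n => (h𝒜.restrict (measurableSet_spanningSets μ n))
    |>.ae_nonneg_of_forall_setIntegral_nonneg (hf n) fun s hs => ?_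
  rw [Measure.restrict_restrict (h𝒜.measurable s hs)]
  exact hpos s hs n

end MeasureTheory.Measure.MeasureDense

section Product

variable {α β : Type*} [MeasurableSpace α] [MeasurableSpace β] {ν : Measure α} {μ : Measure β}

lemma ae_prod_nonneg_of_ae_ae [SFinite ν] [SFinite μ] {w : α × β → ℝ}
    (hw : AEMeasurable w (ν.prod μ)) (h : ∀ᵐ x ∂ν, ∀ᵐ y ∂μ, 0 ≤ w (x, y)) :
    0 ≤ᵐ[ν.prod μ] w := by
  have hmk : ∀ᵐ p ∂(ν.prod μ), 0 ≤ hw.mk w p := by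
    rw [Measure.ae_prod_iff_ae_ae (measurableSet_le measurable_const hw.measurable_mk)]
    filter_upwards [h, Measure.ae_ae_of_ae_prod hw.ae_eq_mk] with x hx hxmk
    filter_upwards [hx, hxmk] with y hy hymk
    exact hymk ▸ hy
  filter_upwards [hmk, hw.ae_eq_mk] with p hp hpmk
  exact hpmk ▸ hp

lemma ae_prod_nonneg_of_forall_setIntegral_nonneg [SFinite ν] [SigmaFinite μ] [IsSeparable μ]
    {w : α × β → ℝ} (hw : AEMeasurable w (ν.prod μ))
    (h : ∀ E, MeasurableSet E → μ E < ∞ →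
      ∀ᵐ x ∂ν, IntegrableOn (fun y => w (x, y)) E μ ∧ 0 ≤ ∫ y in E, w (x, y) ∂μ) :
    0 ≤ᵐ[ν.prod μ] w := by
  obtain ⟨𝒜, h𝒜c, h𝒜⟩ := exists_countable_measureDense (μ := μ)
  have hS : ∀ s, MeasurableSet s → ∀ n, MeasurableSet (s ∩ spanningSets μ n) ∧
      μ (s ∩ spanningSets μ n) < ∞ := fun s hs n =>
    ⟨hs.inter (measurableSet_spanningSets μ n),
      (measure_mono inter_subset_right).trans_lt (measure_spanningSets_lt_top μ n)⟩
  have hint : ∀ᵐ x ∂ν, ∀ n, IntegrableOn (fun y => w (x, y)) (spanningSets μ n) μ := by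
    refine ae_all_iff.2 fun n => ?_
    obtain ⟨hm, hfin⟩ := hS univ MeasurableSet.univ n
    simpa using (h _ hm hfin).mono fun x hx => hx.1
  have hpos : ∀ᵐ x ∂ν, ∀ s ∈ 𝒜, ∀ n, 0 ≤ ∫ y in s ∩ spanningSets μ n, w (x, y) ∂μ :=
    (ae_ball_iff h𝒜c).2 fun s hs => ae_all_iff.2 fun n =>
      (h _ (hS s (h𝒜.measurable s hs) n).1 (hS s (h𝒜.measurable s hs) n).2).mono fun x hx => hx.2
  refine ae_prod_nonneg_of_ae_ae hw ?_
  filter_upwards [hint, hpos] with x hxint hxpos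
  exact h𝒜.ae_nonneg_of_forall_setIntegral_inter_spanningSets_nonneg hxint hxpos

lemma ae_prod_eq_zero_of_forall_setIntegral_eq_zero [SFinite ν] [SigmaFinite μ] [IsSeparable μ]
    {w : α × β → ℝ} (hw : AEMeasurable w (ν.prod μ))
    (h : ∀ E, MeasurableSet E → μ E < ∞ →
      ∀ᵐ x ∂ν, IntegrableOn (fun y => w (x, y)) E μ ∧ ∫ y in E, w (x, y) ∂μ = 0) :
    w =ᵐ[ν.prod μ] 0 := by
  have hnonneg := ae_prod_nonneg_of_forall_setIntegral_nonneg hw fun E hE hμE =>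
    (h E hE hμE).mono fun x hx => ⟨hx.1, hx.2.ge⟩
  have hnonpos := ae_prod_nonneg_of_forall_setIntegral_nonneg hw.neg fun E hE hμE =>
    (h E hE hμE).mono fun x hx => ⟨hx.1.neg, by simp [integral_neg, hx.2]⟩
  filter_upwards [hnonneg, hnonpos] with p h₁ h₂
  exact le_antisymm (neg_nonneg.1 h₂) h₁

end Product

lemma Complex.ofReal_le_iff {r : ℝ} {z : ℂ} : (r : ℂ) ≤ z ↔ r ≤ z.re ∧ z.im = 0 := by
  simp [Complex.le_def, eq_comm]

lemma Complex.norm_le_of_forall_re_mul_le {T : Set ℂ} (hT : Dense T) {z : ℂ} {r : ℝ}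
    (h : ∀ c ∈ T, (c * z).re ≤ ‖c‖ * r) : ‖z‖ ≤ r := by
  have hall : ∀ c, (c * z).re ≤ ‖c‖ * r := hT.induction h <|
    isClosed_le (continuous_re.comp (continuous_mul_const z)) (continuous_norm.mul continuous_const)
  rcases eq_or_ne z 0 with rfl | hz
  · simpa using hall 1
  -- testing against `c = conj z` gives `‖z‖ ^ 2 ≤ ‖z‖ * r`
  have := hall ((starRingEnd ℂ) z)
  rw [mul_comm, mul_conj, normSq_eq_norm_sq, norm_conj, ofReal_re, sq] at this
  exact le_of_mul_le_mul_left this (norm_pos_iff.2 hz)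

lemma norm_integral_mul_le_integral_mul_norm {β : Type*} [MeasurableSpace β] {μ : Measure β}
    {φ ψ f g : β → ℂ} (hψg : Integrable (fun y => ψ y * g y) μ)
    (hg : g =ᵐ[μ] fun y => (‖f y‖ : ℂ)) (hφψ : ∀ᵐ y ∂μ, (‖φ y‖ : ℂ) ≤ ψ y) :
    (‖∫ y, φ y * f y ∂μ‖ : ℂ) ≤ ∫ y, ψ y * g y ∂μ := by
  have hreal : (fun y => ψ y * g y) =ᵐ[μ] fun y => (((ψ y).re * ‖f y‖ : ℝ) : ℂ) := by
    filter_upwards [hg, hφψ] with y hgy hy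
    rw [hgy, Complex.ofReal_mul, ← Complex.eq_re_of_ofReal_le hy]
  rw [integral_congr_ae hreal, integral_complex_ofReal, Complex.real_le_real]
  refine norm_integral_le_of_norm_le ((hψg.congr hreal).re) ?_
  filter_upwards [hφψ] with y hy
  rw [norm_mul]
  exact mul_le_mul_of_nonneg_right (Complex.ofReal_le_iff.1 hy).1 (norm_nonneg _)

lemma mul_indicatorConstLp_ae_eq {M : Type*} [MeasurableSpace M] {μ : Measure M} {p : ℝ≥0∞}
    {E : Set M} (hE : MeasurableSet E) (hμE : μ E ≠ ∞) (φ : M → ℂ) (c : ℂ) :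
    (fun y => φ y * (indicatorConstLp p hE hμE c : M → ℂ) y) =ᵐ[μ]
      E.indicator fun y => φ y * c := by
  filter_upwards [indicatorConstLp_coeFn (p := p) (hs := hE) (hμs := hμE) (c := c)] with y hy
  by_cases hyE : y ∈ E <;> simp [hy, hyE]

section IntegralOperators

variable {M : Type*} [MeasurableSpace M] {μ : Measure M}

def HasIntegralKernel (A : Lp ℂ 2 μ →L[ℂ] Lp ℂ 2 μ) (a : M × M → ℂ) : Prop :=
  ∀ f : Lp ℂ 2 μ, (∀ᵐ x ∂μ, Integrable (fun y => a (x, y) * f y) μ) ∧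
    (A f : M → ℂ) =ᵐ[μ] fun x => ∫ y, a (x, y) * f y ∂μ

-- `≤` is the partial order of `ℂ`: it also forces `A g x` to be real.
def IsDominatedBy (B A : Lp ℂ 2 μ →L[ℂ] Lp ℂ 2 μ) : Prop :=
  ∀ f g : Lp ℂ 2 μ, (g : M → ℂ) =ᵐ[μ] (fun x => (‖f x‖ : ℂ)) →
    ∀ᵐ x ∂μ, (‖B f x‖ : ℂ) ≤ A g x

variable {A B : Lp ℂ 2 μ →L[ℂ] Lp ℂ 2 μ} {a b : M × M → ℂ}

namespace HasIntegralKernel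

variable (hA : HasIntegralKernel A a) {E : Set M} (hE : MeasurableSet E) (hμE : μ E ≠ ∞)
include hA hE hμE

lemma ae_integrableOn : ∀ᵐ x ∂μ, IntegrableOn (fun y => a (x, y)) E μ := by
  filter_upwards [(hA (indicatorConstLp 2 hE hμE 1)).1] with x hx
  simpa using (integrable_indicator_iff hE).1 (hx.congr (mul_indicatorConstLp_ae_eq hE hμE _ 1))

lemma apply_indicatorConstLp (c : ℂ) :
    ∀ᵐ x ∂μ, A (indicatorConstLp 2 hE hμE c) x = (∫ y in E, a (x, y) ∂μ) * c := by
  filter_upwards [(hA (indicatorConstLp 2 hE hμE c)).2] with x hx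
  rw [hx, integral_congr_ae (mul_indicatorConstLp_ae_eq hE hμE _ c), integral_indicator hE,
    integral_mul_const]

end HasIntegralKernel

lemma IsDominatedBy.norm_mul_setIntegral_le (hdom : IsDominatedBy B A)
    (hA : HasIntegralKernel A a) (hB : HasIntegralKernel B b) {E : Set M} (hE : MeasurableSet E)
    (hμE : μ E ≠ ∞) (c : ℂ) :
    ∀ᵐ x ∂μ, (‖c * ∫ y in E, b (x, y) ∂μ‖ : ℂ) ≤ ‖c‖ * ∫ y in E, a (x, y) ∂μ := by
  have hg : (indicatorConstLp 2 hE hμE (‖c‖ : ℂ) : M → ℂ) =ᵐ[μ]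
      fun x => (‖indicatorConstLp 2 hE hμE c x‖ : ℂ) := by
    filter_upwards [indicatorConstLp_coeFn (p := 2) (hs := hE) (hμs := hμE) (c := (‖c‖ : ℂ)),
      indicatorConstLp_coeFn (p := 2) (hs := hE) (hμs := hμE) (c := c)] with x h₁ h₂
    by_cases hx : x ∈ E <;> simp [h₁, h₂, hx]
  filter_upwards [hdom _ _ hg, hB.apply_indicatorConstLp hE hμE c,
    hA.apply_indicatorConstLp hE hμE ‖c‖] with x hx hBx hAx
  rwa [hBx, hAx, mul_comm, mul_comm _ (‖c‖ : ℂ)] at hx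

namespace IsDominatedBy

variable [SigmaFinite μ] [IsSeparable μ] (hdom : IsDominatedBy B A) (hA : HasIntegralKernel A a)
  (hB : HasIntegralKernel B b)
include hdom hA hB

lemma ae_im_kernel_eq_zero (ha : AEMeasurable a (μ.prod μ)) :
    ∀ᵐ p ∂(μ.prod μ), (a p).im = 0 := by
  refine ae_prod_eq_zero_of_forall_setIntegral_eq_zero
    (Complex.measurable_im.comp_aemeasurable ha) fun E hE hμE => ?_
  filter_upwards [hA.ae_integrableOn hE hμE.ne, hdom.norm_mul_setIntegral_le hA hB hE hμE.ne 1]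
    with x hxa hle
  have him : ∫ y in E, (a (x, y)).im ∂μ = (∫ y in E, a (x, y) ∂μ).im := integral_im hxa
  refine ⟨hxa.im, ?_⟩
  simpa [him] using (Complex.ofReal_le_iff.1 hle).2

lemma ae_re_mul_kernel_le (ha : AEMeasurable a (μ.prod μ)) (hb : AEMeasurable b (μ.prod μ))
    (c : ℂ) : ∀ᵐ p ∂(μ.prod μ), (c * b p).re ≤ ‖c‖ * (a p).re := by
  have hw : AEMeasurable (fun p => ‖c‖ * (a p).re - (c * b p).re) (μ.prod μ) := by fun_prop
  have hint : ∀ E, MeasurableSet E → μ E < ∞ → ∀ᵐ x ∂μ,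
      IntegrableOn (fun y => ‖c‖ * (a (x, y)).re - (c * b (x, y)).re) E μ ∧
        0 ≤ ∫ y in E, ‖c‖ * (a (x, y)).re - (c * b (x, y)).re ∂μ := fun E hE hμE => by
    filter_upwards [hA.ae_integrableOn hE hμE.ne, hB.ae_integrableOn hE hμE.ne,
      hdom.norm_mul_setIntegral_le hA hB hE hμE.ne c] with x hxa hxb hle
    have hxa' : IntegrableOn (fun y => ‖c‖ * (a (x, y)).re) E μ := hxa.re.const_mul ‖c‖
    have hxb' : IntegrableOn (fun y => (c * b (x, y)).re) E μ := (hxb.const_mul c).re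
    have hre_a : ∫ y in E, (a (x, y)).re ∂μ = (∫ y in E, a (x, y) ∂μ).re := integral_re hxa
    have hre_b : ∫ y in E, (c * b (x, y)).re ∂μ = (c * ∫ y in E, b (x, y) ∂μ).re := by
      rw [← integral_const_mul]
      exact integral_re (hxb.const_mul c)
    have hle' := (Complex.ofReal_le_iff.1 hle).1
    rw [Complex.re_ofReal_mul] at hle'
    refine ⟨hxa'.sub hxb', ?_⟩
    rw [integral_sub hxa' hxb', integral_const_mul, hre_a, hre_b]
    linarith [Complex.re_le_norm (c * ∫ y in E, b (x, y) ∂μ)]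
  filter_upwards [ae_prod_nonneg_of_forall_setIntegral_nonneg hw hint] with p hp
  simpa using hp

lemma ae_norm_kernel_le (ha : AEMeasurable a (μ.prod μ)) (hb : AEMeasurable b (μ.prod μ)) :
    ∀ᵐ p ∂(μ.prod μ), (‖b p‖ : ℂ) ≤ a p := by
  obtain ⟨T, hTc, hT⟩ := TopologicalSpace.exists_countable_dense ℂ
  filter_upwards [hdom.ae_im_kernel_eq_zero hA hB ha,
    (ae_ball_iff hTc).2 fun c _ => hdom.ae_re_mul_kernel_le hA hB ha hb c] with p hpim hpre
  exact Complex.ofReal_le_iff.2 ⟨Complex.norm_le_of_forall_re_mul_le hT hpre, hpim⟩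

end IsDominatedBy

lemma isDominatedBy_of_ae_norm_kernel_le [SFinite μ] (hA : HasIntegralKernel A a)
    (hB : HasIntegralKernel B b) (hk : ∀ᵐ p ∂(μ.prod μ), (‖b p‖ : ℂ) ≤ a p) :
    IsDominatedBy B A := fun f g hg => by
  filter_upwards [(hB f).2, (hA g).2, (hA g).1, Measure.ae_ae_of_ae_prod hk]
    with x hBx hAx hint hkx
  rw [hBx, hAx]
  exact norm_integral_mul_le_integral_mul_norm hint hg hkx

end IntegralOperators

theorem integral_operator_dominated_iff_kernel_dominated_general
    {M : Type*} [MeasurableSpace M] (μ : Measure M) [SigmaFinite μ]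
    [MeasureTheory.IsSeparable μ]
    (a b : M × M → ℂ) (ha : AEMeasurable a (μ.prod μ)) (hb : AEMeasurable b (μ.prod μ))
    (A B : Lp ℂ 2 μ →L[ℂ] Lp ℂ 2 μ)
    (hintA : ∀ f : Lp ℂ 2 μ, ∀ᵐ x ∂μ, Integrable (fun y => a (x, y) * f y) μ)
    (hA : ∀ f : Lp ℂ 2 μ, (A f : M → ℂ) =ᵐ[μ] fun x => ∫ y, a (x, y) * f y ∂μ)
    (hintB : ∀ f : Lp ℂ 2 μ, ∀ᵐ x ∂μ, Integrable (fun y => b (x, y) * f y) μ)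
    (hB : ∀ f : Lp ℂ 2 μ, (B f : M → ℂ) =ᵐ[μ] fun x => ∫ y, b (x, y) * f y ∂μ) :
    (∀ f g : Lp ℂ 2 μ, (g : M → ℂ) =ᵐ[μ] (fun x => (‖f x‖ : ℂ)) →
        ∀ᵐ x ∂μ, (‖B f x‖ : ℂ) ≤ A g x) ↔
      (∀ᵐ p ∂(μ.prod μ), (‖b p‖ : ℂ) ≤ a p) := by
  have hkA : HasIntegralKernel A a := fun f => ⟨hintA f, hA f⟩
  have hkB : HasIntegralKernel B b := fun f => ⟨hintB f, hB f⟩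
  exact ⟨fun hdom => IsDominatedBy.ae_norm_kernel_le hdom hkA hkB ha hb,
    isDominatedBy_of_ae_norm_kernel_le hkA hkB⟩

/-- Let `A` and `B` be bounded integral operators on `L²(M; dμ)` with `μ ⊗ μ`-measurable
integral kernels `a` and `b`, respectively, and suppose that `A` is positivity preserving.
Then `B` is dominated by `A`, i.e. `|Bf| ≤ A|f|` μ-a.e. for every `f ∈ L²(M; dμ)`, if and
only if `|b(x,y)| ≤ a(x,y)` for `μ ⊗ μ`-a.e. `(x,y) ∈ M × M`. -/
theorem integral_operator_dominated_iff_kernel_dominated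
    {M : Type*} [MeasurableSpace M] (μ : Measure M) [SigmaFinite μ]
    [MeasureTheory.IsSeparable μ] (hμ : μ ≠ 0)
    (a b : M × M → ℂ) (ha : AEMeasurable a (μ.prod μ)) (hb : AEMeasurable b (μ.prod μ))
    (A B : Lp ℂ 2 μ →L[ℂ] Lp ℂ 2 μ)
    (hintA : ∀ f : Lp ℂ 2 μ, ∀ᵐ x ∂μ, Integrable (fun y => a (x, y) * f y) μ)
    (hA : ∀ f : Lp ℂ 2 μ, (A f : M → ℂ) =ᵐ[μ] fun x => ∫ y, a (x, y) * f y ∂μ)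
    (hintB : ∀ f : Lp ℂ 2 μ, ∀ᵐ x ∂μ, Integrable (fun y => b (x, y) * f y) μ)
    (hB : ∀ f : Lp ℂ 2 μ, (B f : M → ℂ) =ᵐ[μ] fun x => ∫ y, b (x, y) * f y ∂μ)
    (hpos : ∀ f : Lp ℂ 2 μ, f ≠ 0 → (∀ᵐ x ∂μ, 0 ≤ f x) → (∀ᵐ x ∂μ, 0 ≤ A f x)) :
    (∀ f g : Lp ℂ 2 μ, (g : M → ℂ) =ᵐ[μ] (fun x => (‖f x‖ : ℂ)) →
        ∀ᵐ x ∂μ, (‖B f x‖ : ℂ) ≤ A g x) ↔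
      (∀ᵐ p ∂(μ.prod μ), (‖b p‖ : ℂ) ≤ a p) :=
  integral_operator_dominated_iff_kernel_dominated_general μ a b ha hb A B hintA hA hintB hB
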